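/- For every x ∈ ℝ^d one has ⟨∇V(x), x⟩ ≥ 2 V(x); in particular ⟨∇V(x), x⟩ > 0 for all x ≠ 0. -/

import Mathlib

/-!
Since `⟪P (2x - μ), x⟫ = ⟪x, P x⟫ + σ(x)` and `max(σ, 0) σ = max(σ, 0)²`, pairing the gradient
with `x` gives exactly `2 V(x) + 2 Σ_l max(σ_l(x), 0) ⟪x, P_l x⟫`, and the extra sum is nonnegative
because each `P_l` is positive semidefinite. Strict positivity then follows from
`V(x) ≥ ⟪x, P₀ x⟫ > 0`.
-/

open scoped RealInnerProductSpace BigOperators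

/-- Action of a `d × d` real matrix on `ℝ^d` (Euclidean space). -/
noncomputable def mApp {d : ℕ} (P : Matrix (Fin d) (Fin d) ℝ)
    (x : EuclideanSpace ℝ (Fin d)) : EuclideanSpace ℝ (Fin d) :=
  Matrix.toEuclideanLin P x

/-- `σ(x) = ⟨x, P(x − μ)⟩`. -/
noncomputable def sig {d : ℕ} (P : Matrix (Fin d) (Fin d) ℝ)
    (μ x : EuclideanSpace ℝ (Fin d)) : ℝ :=
  ⟪x, mApp P (x - μ)⟫

/-- Candidate control Lyapunov function
`V(x) = ⟨x, P₀ x⟩ + Σ_{l=1}^{L} max(σ_l(x), 0)²`. -/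
noncomputable def V {d L : ℕ} (P₀ : Matrix (Fin d) (Fin d) ℝ)
    (P : Fin L → Matrix (Fin d) (Fin d) ℝ) (μ : Fin L → EuclideanSpace ℝ (Fin d))
    (x : EuclideanSpace ℝ (Fin d)) : ℝ :=
  ⟪x, mApp P₀ x⟫ + ∑ l, max (sig (P l) (μ l) x) 0 ^ 2

/-- The gradient formula
`∇V(x) = 2 P₀ x + 2 Σ_{l=1}^{L} max(σ_l(x), 0) · P_l (2x − μ_l)`. -/
noncomputable def gradV {d L : ℕ} (P₀ : Matrix (Fin d) (Fin d) ℝ)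
    (P : Fin L → Matrix (Fin d) (Fin d) ℝ) (μ : Fin L → EuclideanSpace ℝ (Fin d))
    (x : EuclideanSpace ℝ (Fin d)) : EuclideanSpace ℝ (Fin d) :=
  (2 : ℝ) • mApp P₀ x +
    (2 : ℝ) • ∑ l, max (sig (P l) (μ l) x) 0 • mApp (P l) ((2 : ℝ) • x - μ l)

lemma inner_mApp {d : ℕ} (P : Matrix (Fin d) (Fin d) ℝ) (x y : EuclideanSpace ℝ (Fin d)) :
    ⟪x, mApp P y⟫ = dotProduct x.ofLp (P.mulVec y.ofLp) :=
  dotProduct_comm _ _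

lemma Matrix.PosSemidef.inner_mApp_self_nonneg {d : ℕ} {P : Matrix (Fin d) (Fin d) ℝ}
    (hP : P.PosSemidef) (x : EuclideanSpace ℝ (Fin d)) : 0 ≤ ⟪x, mApp P x⟫ := by
  rw [inner_mApp]
  exact hP.dotProduct_mulVec_nonneg x.ofLp

lemma Matrix.PosDef.inner_mApp_self_pos {d : ℕ} {P : Matrix (Fin d) (Fin d) ℝ}
    (hP : P.PosDef) {x : EuclideanSpace ℝ (Fin d)} (hx : x ≠ 0) : 0 < ⟪x, mApp P x⟫ := by
  rw [inner_mApp]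
  exact hP.dotProduct_mulVec_pos (by simpa using hx)

lemma inner_mApp_two_smul_sub {d : ℕ} (P : Matrix (Fin d) (Fin d) ℝ)
    (μ x : EuclideanSpace ℝ (Fin d)) :
    ⟪mApp P ((2 : ℝ) • x - μ), x⟫ = ⟪x, mApp P x⟫ + sig P μ x := by
  rw [sig, two_smul, add_sub_assoc, mApp, map_add, inner_add_left, real_inner_comm,
    real_inner_comm x]
  rfl

lemma max_zero_mul_self (a : ℝ) : max a 0 * a = max a 0 ^ 2 := by
  rcases le_total a 0 with h | h <;> simp [h, sq]

lemma inner_gradV_self {d L : ℕ} (P₀ : Matrix (Fin d) (Fin d) ℝ)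
    (P : Fin L → Matrix (Fin d) (Fin d) ℝ) (μ : Fin L → EuclideanSpace ℝ (Fin d))
    (x : EuclideanSpace ℝ (Fin d)) :
    ⟪gradV P₀ P μ x, x⟫ =
      2 * V P₀ P μ x + 2 * ∑ l, max (sig (P l) (μ l) x) 0 * ⟪x, mApp (P l) x⟫ := by
  simp only [gradV, V, inner_add_left, real_inner_smul_left, sum_inner, inner_mApp_two_smul_sub,
    mul_add, max_zero_mul_self, Finset.sum_add_distrib, real_inner_comm (mApp P₀ x)]
  ring

lemma two_mul_V_le_inner_gradV {d L : ℕ} (P₀ : Matrix (Fin d) (Fin d) ℝ)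
    {P : Fin L → Matrix (Fin d) (Fin d) ℝ} (μ : Fin L → EuclideanSpace ℝ (Fin d))
    (hP : ∀ l, (P l).PosSemidef) (x : EuclideanSpace ℝ (Fin d)) :
    2 * V P₀ P μ x ≤ ⟪gradV P₀ P μ x, x⟫ := by
  have hsum : 0 ≤ ∑ l, max (sig (P l) (μ l) x) 0 * ⟪x, mApp (P l) x⟫ :=
    Finset.sum_nonneg fun l _ => mul_nonneg (le_max_right _ _) ((hP l).inner_mApp_self_nonneg x)
  rw [inner_gradV_self]
  linarith

lemma inner_mApp_self_le_V {d L : ℕ} (P₀ : Matrix (Fin d) (Fin d) ℝ)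
    (P : Fin L → Matrix (Fin d) (Fin d) ℝ) (μ : Fin L → EuclideanSpace ℝ (Fin d))
    (x : EuclideanSpace ℝ (Fin d)) : ⟪x, mApp P₀ x⟫ ≤ V P₀ P μ x :=
  le_add_of_nonneg_right (Finset.sum_nonneg fun _ _ => sq_nonneg _)

/-- for every `x`, `⟨∇V(x), x⟩ ≥ 2 V(x)`; in particular
`⟨∇V(x), x⟩ > 0` for all `x ≠ 0`. -/
theorem stmt_6 {d L : ℕ} (P₀ : Matrix (Fin d) (Fin d) ℝ)
    (P : Fin L → Matrix (Fin d) (Fin d) ℝ) (μ : Fin L → EuclideanSpace ℝ (Fin d))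
    (hP₀ : P₀.PosDef) (hP : ∀ l, (P l).PosDef) :
    (∀ x : EuclideanSpace ℝ (Fin d), 2 * V P₀ P μ x ≤ ⟪gradV P₀ P μ x, x⟫) ∧
      ∀ x : EuclideanSpace ℝ (Fin d), x ≠ 0 → 0 < ⟪gradV P₀ P μ x, x⟫ := by
  have hgrad := two_mul_V_le_inner_gradV P₀ μ fun l => (hP l).posSemidef
  refine ⟨hgrad, fun x hx => ?_⟩
  have hV : 0 < V P₀ P μ x :=
    (hP₀.inner_mApp_self_pos hx).trans_le (inner_mApp_self_le_V P₀ P μ x)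
  linarith [hgrad x]
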